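/- arXiv:2208.00905 — 3 statements merged into one kernel-verified Lean document; each statement's English description precedes it below -/
import Mathlib

section
/- If the sequence {M u_{[k−n,k]}}_{k=n}^{N−1} is persistently exciting of order 1, then for every initial state x_0 ∈ ℝ^n, the output sequence {y_k}_{k=0}^{N−1} generated by the system from x_0 under input {u_k}_{k=0}^{N−1} is persistently exciting of order 1. -/
open Matrix Finset

noncomputable def stateSeq {n m : ℕ} (A : Matrix (Fin n) (Fin n) ℝ) (B : Matrix (Fin n) (Fin m) ℝ)
    (x0 : Fin n → ℝ) (u : ℕ → Fin m → ℝ) : ℕ → Fin n → ℝ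
  | 0 => x0
  | k + 1 => A.mulVec (stateSeq A B x0 u k) + B.mulVec (u k)

/-- Output sequence `y_k = C x_k + D u_k` of the LTI system started at `x0` with input `u`. -/
noncomputable def outputSeq {n m p : ℕ} (A : Matrix (Fin n) (Fin n) ℝ) (B : Matrix (Fin n) (Fin m) ℝ)
    (C : Matrix (Fin p) (Fin n) ℝ) (D : Matrix (Fin p) (Fin m) ℝ)
    (x0 : Fin n → ℝ) (u : ℕ → Fin m → ℝ) (k : ℕ) : Fin p → ℝ :=
  C.mulVec (stateSeq A B x0 u k) + D.mulVec (u k)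

/-- Markov parameters: `Γ_0 = D`, `Γ_j = C A^(j-1) B` for `j ≥ 1`. -/
noncomputable def Markov {n m p : ℕ} (A : Matrix (Fin n) (Fin n) ℝ) (B : Matrix (Fin n) (Fin m) ℝ)
    (C : Matrix (Fin p) (Fin n) ℝ) (D : Matrix (Fin p) (Fin m) ℝ) : ℕ → Matrix (Fin p) (Fin m) ℝ
  | 0 => D
  | j + 1 => C * A ^ j * B

/-- The matrix `M = [M_n ⋯ M_1 M_0]` with `M_j = ∑_{q=0}^j d_{j-q} Γ_q`; the block at
block-column `i` (from the left, `i = 0,…,n`) is `M_{n-i}`. -/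
noncomputable def Mmat {n m p : ℕ} (A : Matrix (Fin n) (Fin n) ℝ) (B : Matrix (Fin n) (Fin m) ℝ)
    (C : Matrix (Fin p) (Fin n) ℝ) (D : Matrix (Fin p) (Fin m) ℝ) (d : ℕ → ℝ) :
    Matrix (Fin p) (Fin (n + 1) × Fin m) ℝ :=
  Matrix.of fun i jl =>
    (∑ q ∈ Finset.range ((n - (jl.1 : ℕ)) + 1),
      d ((n - (jl.1 : ℕ)) - q) • Markov A B C D q) i jl.2

/-! The annihilating polynomial `d` of `A` removes the free response from the output:
`∑_q d_q y_{k+n-q} = M u_{[k,k+n]}`, because the state `x_k` enters through `C d(A) x_k = 0`.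
So every column of the matrix built from `M u` is a linear combination of columns of the
output matrix, whose rank is therefore at least `p`. -/

lemma Matrix.rank_le_rank_of_col_mem_span {R m n n' : Type*} [Field R] [Fintype m]
    [Fintype n] [Fintype n'] {X : Matrix m n R} {Y : Matrix m n' R}
    (h : ∀ k, Y.col k ∈ Submodule.span R (Set.range X.col)) : Y.rank ≤ X.rank := by
  rw [rank_eq_finrank_span_cols, rank_eq_finrank_span_cols]
  exact Submodule.finrank_mono (Submodule.span_le.mpr (Set.range_subset_iff.mpr h))

section LTI

variable {n m p : ℕ} (A : Matrix (Fin n) (Fin n) ℝ) (B : Matrix (Fin n) (Fin m) ℝ)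
  (C : Matrix (Fin p) (Fin n) ℝ) (D : Matrix (Fin p) (Fin m) ℝ)
  (x0 : Fin n → ℝ) (u : ℕ → Fin m → ℝ)

lemma stateSeq_add (k t : ℕ) :
    stateSeq A B x0 u (k + t) = (A ^ t) *ᵥ stateSeq A B x0 u k
      + ∑ s ∈ range t, (A ^ (t - 1 - s) * B) *ᵥ u (k + s) := by
  induction t with
  | zero => simp
  | succ t ih =>
    rw [← add_assoc, stateSeq, ih, mulVec_add, mulVec_mulVec, ← pow_succ', mulVec_sum,
      sum_range_succ, Nat.add_sub_cancel, Nat.sub_self, pow_zero, Matrix.one_mul, add_assoc]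
    congr 2
    refine sum_congr rfl fun s hs => ?_
    rw [mulVec_mulVec, ← Matrix.mul_assoc, ← pow_succ']
    congr 3
    have := mem_range.mp hs
    omega

lemma outputSeq_add (k t : ℕ) :
    outputSeq A B C D x0 u (k + t) = (C * A ^ t) *ᵥ stateSeq A B x0 u k
      + ∑ s ∈ range (t + 1), Markov A B C D (t - s) *ᵥ u (k + s) := by
  rw [outputSeq, stateSeq_add, mulVec_add, mulVec_mulVec, mulVec_sum, sum_range_succ,
    Nat.sub_self, add_assoc]
  congr 2
  refine sum_congr rfl fun s hs => ?_
  obtain ⟨j, hj⟩ : ∃ j, t - s = j + 1 := ⟨t - 1 - s, by have := mem_range.mp hs; omega⟩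
  rw [hj, Markov, mulVec_mulVec, Matrix.mul_assoc]
  congr 4
  omega

end LTI

section Mmat

variable {n m p : ℕ} (A : Matrix (Fin n) (Fin n) ℝ) (B : Matrix (Fin n) (Fin m) ℝ)
  (C : Matrix (Fin p) (Fin n) ℝ) (D : Matrix (Fin p) (Fin m) ℝ) (d : ℕ → ℝ)
  (u : ℕ → Fin m → ℝ)

lemma Mmat_mulVec_window (k : ℕ) :
    Mmat A B C D d *ᵥ (fun il : Fin (n + 1) × Fin m => u (k + il.1) il.2)
      = ∑ i ∈ range (n + 1), ∑ q ∈ range (n - i + 1),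
          d q • (Markov A B C D (n - i - q) *ᵥ u (k + i)) := by
  have hblocks : Mmat A B C D d *ᵥ (fun il : Fin (n + 1) × Fin m => u (k + il.1) il.2)
      = ∑ i : Fin (n + 1), (∑ q ∈ range (n - i + 1), d (n - i - q) • Markov A B C D q)
          *ᵥ u (k + i) := by
    ext r
    simp only [Mmat, mulVec, dotProduct, Fintype.sum_prod_type, of_apply, Finset.sum_apply]
  rw [hblocks, Fin.sum_univ_eq_sum_range (fun i => (∑ q ∈ range (n - i + 1),
    d (n - i - q) • Markov A B C D q) *ᵥ u (k + i))]
  refine sum_congr rfl fun i _ => ?_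
  rw [sum_mulVec, ← sum_range_reflect]
  refine sum_congr rfl fun q hq => ?_
  have := mem_range.mp hq
  rw [smul_mulVec]
  congr 3; omega

lemma sum_smul_outputSeq_eq_Mmat_mulVec
    (hCayley : ∑ j ∈ range (n + 1), d j • A ^ (n - j) = 0) (x0 : Fin n → ℝ) (k : ℕ) :
    ∑ q ∈ range (n + 1), d q • outputSeq A B C D x0 u (k + (n - q))
      = Mmat A B C D d *ᵥ (fun il : Fin (n + 1) × Fin m => u (k + il.1) il.2) := by
  have hfree : ∑ q ∈ range (n + 1), d q • ((C * A ^ (n - q)) *ᵥ stateSeq A B x0 u k) = 0 := by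
    simp only [← smul_mulVec, ← sum_mulVec, ← Matrix.mul_smul, ← Matrix.mul_sum, hCayley,
      Matrix.mul_zero, zero_mulVec]
  simp only [outputSeq_add, smul_add, sum_add_distrib, smul_sum]
  rw [hfree, zero_add, Mmat_mulVec_window]
  refine (sum_comm' fun q s => ?_).trans (sum_congr rfl fun i _ => sum_congr rfl fun q _ => ?_)
  · simp only [mem_range]
    omega
  · rw [Nat.sub_right_comm]

end Mmat

theorem stmt_3_general {n m p : ℕ}
    (A : Matrix (Fin n) (Fin n) ℝ) (B : Matrix (Fin n) (Fin m) ℝ)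
    (C : Matrix (Fin p) (Fin n) ℝ) (D : Matrix (Fin p) (Fin m) ℝ)
    (d : ℕ → ℝ)
    (hCayley : ∑ j ∈ Finset.range (n + 1), d j • A ^ (n - j) = 0)
    (N : ℕ) (u : ℕ → Fin m → ℝ)
    (hPE : (Matrix.of fun (i : Fin p) (k : Fin (N - n)) =>
        (Mmat A B C D d).mulVec
          (fun il : Fin (n + 1) × Fin m => u ((k : ℕ) + (il.1 : ℕ)) il.2) i).rank = p) :
    ∀ x0 : Fin n → ℝ,
      (Matrix.of fun (i : Fin p) (k : Fin N) => outputSeq A B C D x0 u (k : ℕ) i).rank = p := by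
  intro x0
  refine le_antisymm (rank_le_height _)
    (hPE.symm.trans_le (rank_le_rank_of_col_mem_span fun k => ?_))
  have hcol : (Matrix.of fun (i : Fin p) (k : Fin (N - n)) =>
      (Mmat A B C D d *ᵥ fun il : Fin (n + 1) × Fin m => u (k + il.1) il.2) i).col k
      = ∑ q ∈ range (n + 1), d q • outputSeq A B C D x0 u (k + (n - q)) :=
    (sum_smul_outputSeq_eq_Mmat_mulVec A B C D d u hCayley x0 k).symm
  rw [hcol]
  refine Submodule.sum_mem _ fun q hq => Submodule.smul_mem _ _ (Submodule.subset_span ?_)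
  exact ⟨⟨k + (n - q), by omega⟩, rfl⟩

/-- if `{M u_{[k-n,k]}}_{k=n}^{N-1}` is PE of order 1 (full row rank `p` of the
matrix with those columns), then for every initial state the output sequence
`{y_k}_{k=0}^{N-1}` is PE of order 1. -/
theorem stmt_3 {n m p : ℕ} (hn : 0 < n) (hm : 0 < m) (hp : 0 < p)
    (A : Matrix (Fin n) (Fin n) ℝ) (B : Matrix (Fin n) (Fin m) ℝ)
    (C : Matrix (Fin p) (Fin n) ℝ) (D : Matrix (Fin p) (Fin m) ℝ)
    (d : ℕ → ℝ) (hd0 : d 0 ≠ 0)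
    (hdnorm : ∑ j ∈ Finset.range (n + 1), d j ^ 2 = 1)
    (hCayley : ∑ j ∈ Finset.range (n + 1), d j • A ^ (n - j) = 0)
    (N : ℕ) (hN : n < N) (u : ℕ → Fin m → ℝ)
    (hPE : (Matrix.of fun (i : Fin p) (k : Fin (N - n)) =>
        (Mmat A B C D d).mulVec
          (fun il : Fin (n + 1) × Fin m => u ((k : ℕ) + (il.1 : ℕ)) il.2) i).rank = p) :
    ∀ x0 : Fin n → ℝ,
      (Matrix.of fun (i : Fin p) (k : Fin N) => outputSeq A B C D x0 u (k : ℕ) i).rank = p :=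
  stmt_3_general A B C D d hCayley N u hPE
end

section
/- For every symmetric positive definite K_u ∈ ℝ^{m(n+1)×m(n+1)}, the matrix inequality M K_u M^T ⪰ λ_min(Γ̄ K_u Γ̄^T) · I_p holds in the Loewner order, where λ_min denotes the minimum eigenvalue. -/
open Matrix Finset

/-- Block lower-triangular Toeplitz matrix `Γ̄` with `(i,j)`-block `Γ_{i-j}` for `j ≤ i`. -/
noncomputable def Gammabar {n m p : ℕ} (A : Matrix (Fin n) (Fin n) ℝ) (B : Matrix (Fin n) (Fin m) ℝ)
    (C : Matrix (Fin p) (Fin n) ℝ) (D : Matrix (Fin p) (Fin m) ℝ) :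
    Matrix (Fin (n + 1) × Fin p) (Fin (n + 1) × Fin m) ℝ :=
  Matrix.of fun ir jl =>
    if (jl.1 : ℕ) ≤ (ir.1 : ℕ) then Markov A B C D ((ir.1 : ℕ) - (jl.1 : ℕ)) ir.2 jl.2 else 0

/-- The set of (real) eigenvalues of a square matrix. -/
def eigSet {k : Type} [Fintype k] (A : Matrix k k ℝ) : Set ℝ :=
  {t : ℝ | ∃ v : k → ℝ, v ≠ 0 ∧ A.mulVec v = t • v}

/-- Minimum (real) eigenvalue `λ_min` of a square matrix. -/
noncomputable def lamMin {k : Type} [Fintype k] (A : Matrix k k ℝ) : ℝ :=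
  sInf (eigSet A)

/-!
Write `M = E Γ̄` with `E = [d_n I_p ⋯ d_1 I_p d_0 I_p]`, so that `E Eᵀ = ‖d‖² I_p = I_p`.
By the spectral theorem `S = Γ̄ K_u Γ̄ᵀ` satisfies `S ⪰ λ_min(S) I`, the minimum eigenvalue being
the least point of the (finite) spectrum. Congruence by `E` preserves the Loewner order, hence
`M K_u Mᵀ = E S Eᵀ ⪰ λ_min(S) E Eᵀ = λ_min(S) I_p`.
-/

theorem eigSet_eq_spectrum {k : Type} [Fintype k] [DecidableEq k] (A : Matrix k k ℝ) :
    eigSet A = spectrum ℝ A := by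
  ext t
  rw [← spectrum_toLin', ← Module.End.hasEigenvalue_iff_mem_spectrum]
  constructor
  · rintro ⟨v, hv0, hv⟩
    exact Module.End.hasEigenvalue_of_hasEigenvector
      ⟨by simpa [Module.End.mem_eigenspace_iff] using hv, hv0⟩
  · intro h
    obtain ⟨v, hv⟩ := h.exists_hasEigenvector
    exact ⟨v, hv.2, by simpa [Module.End.mem_eigenspace_iff] using hv.1⟩

namespace Matrix

open scoped MatrixOrder in
theorem IsHermitian.posSemidef_sub_lamMin_smul_one {k : Type} [Fintype k] [DecidableEq k]
    {S : Matrix k k ℝ} (hS : S.IsHermitian) : (S - lamMin S • 1).PosSemidef := by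
  rw [← le_iff, ← Algebra.algebraMap_eq_smul_one,
    algebraMap_le_iff_le_spectrum hS.isSelfAdjoint, lamMin, eigSet_eq_spectrum]
  exact fun x hx => csInf_le S.finite_real_spectrum.bddBelow hx

theorem PosSemidef.mul_sub_smul_one_mul_conjTranspose {R ι κ : Type*} [CommRing R]
    [PartialOrder R] [StarRing R] [Fintype ι] [Fintype κ] [DecidableEq ι] [DecidableEq κ]
    {S : Matrix ι ι R} {E : Matrix κ ι R} {c : R} (hE : E * Eᴴ = 1)
    (hS : (S - c • 1).PosSemidef) : (E * S * Eᴴ - c • 1).PosSemidef := by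
  have h := hS.mul_mul_conjTranspose_same E
  rwa [Matrix.mul_sub, Matrix.sub_mul, Matrix.mul_smul, Matrix.mul_one, Matrix.smul_mul, hE] at h

def blockRow {ι κ : Type} [DecidableEq κ] (w : ι → ℝ) : Matrix κ (ι × κ) ℝ :=
  of fun i rs => if rs.2 = i then w rs.1 else 0

theorem blockRow_mul_conjTranspose {ι κ : Type} [Fintype ι] [Fintype κ] [DecidableEq κ]
    (w : ι → ℝ) :
    blockRow (κ := κ) w * (blockRow (κ := κ) w)ᴴ = (∑ r, w r ^ 2) • (1 : Matrix κ κ ℝ) := by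
  ext i i'
  simp only [blockRow, mul_apply, conjTranspose_apply, of_apply, star_trivial,
    Fintype.sum_prod_type, Matrix.smul_apply, one_apply, smul_eq_mul]
  by_cases h : i = i'
  · subst h
    simp [sq]
  · simp [h, Ne.symm h]

end Matrix

theorem sum_sq_sub_eq_sum_range_sq (n : ℕ) (d : ℕ → ℝ) :
    ∑ r : Fin (n + 1), d (n - r) ^ 2 = ∑ j ∈ range (n + 1), d j ^ 2 := by
  rw [Fin.sum_univ_eq_sum_range (fun r => d (n - r) ^ 2), ← sum_range_reflect]
  exact sum_congr rfl fun j hj => by rw [mem_range] at hj; congr 2; omega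

theorem Mmat_eq_blockRow_mul_Gammabar {n m p : ℕ} (A : Matrix (Fin n) (Fin n) ℝ)
    (B : Matrix (Fin n) (Fin m) ℝ) (C : Matrix (Fin p) (Fin n) ℝ) (D : Matrix (Fin p) (Fin m) ℝ)
    (d : ℕ → ℝ) :
    Mmat A B C D d =
      blockRow (κ := Fin p) (fun r : Fin (n + 1) => d (n - r)) * Gammabar A B C D := by
  ext i ⟨j, l⟩
  set Γ := fun q => Markov A B C D q i l
  have hlow : ∑ r ∈ range j, d (n - r) * (if (j : ℕ) ≤ r then Γ (r - j) else 0) = 0 :=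
    sum_eq_zero fun r hr => by simp [(mem_range.mp hr).not_ge]
  calc Mmat A B C D d i (j, l)
      = ∑ r ∈ range (n + 1 - j), d (n - (j + r)) * Γ r := by
        simp only [Mmat, of_apply, Matrix.sum_apply, Matrix.smul_apply, smul_eq_mul, Γ]
        rw [show n + 1 - j = n - j + 1 by omega]
        simp only [Nat.sub_sub]
    _ = ∑ r ∈ range (n + 1), d (n - r) * if (j : ℕ) ≤ r then Γ (r - j) else 0 := by
        rw [← sum_range_add_sum_Ico _ j.isLt.le, hlow, zero_add, sum_Ico_eq_sum_range]
        simp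
    _ = ∑ r : Fin (n + 1), d (n - r) * if j ≤ r then Γ (r - j) else 0 :=
        (Fin.sum_univ_eq_sum_range (fun r => d (n - r) * if (j : ℕ) ≤ r then Γ (r - j) else 0)
          _).symm
    _ = _ := by simp [blockRow, Gammabar, mul_apply, Fintype.sum_prod_type, Γ]

theorem stmt_10_general {n m p : ℕ}
    (A : Matrix (Fin n) (Fin n) ℝ) (B : Matrix (Fin n) (Fin m) ℝ)
    (C : Matrix (Fin p) (Fin n) ℝ) (D : Matrix (Fin p) (Fin m) ℝ)
    (d : ℕ → ℝ)
    (hdnorm : ∑ j ∈ Finset.range (n + 1), d j ^ 2 = 1)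
    (Ku : Matrix (Fin (n + 1) × Fin m) (Fin (n + 1) × Fin m) ℝ) (hKu : Ku.PosDef) :
    (Mmat A B C D d * Ku * (Mmat A B C D d)ᴴ -
        lamMin (Gammabar A B C D * Ku * (Gammabar A B C D)ᴴ) •
          (1 : Matrix (Fin p) (Fin p) ℝ)).PosSemidef := by
  set G := Gammabar A B C D
  set E := blockRow (κ := Fin p) (fun r : Fin (n + 1) => d (n - r))
  have hE : E * Eᴴ = 1 := by
    rw [blockRow_mul_conjTranspose, sum_sq_sub_eq_sum_range_sq, hdnorm, one_smul]
  have hS : (G * Ku * Gᴴ).IsHermitian :=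
    (hKu.posSemidef.mul_mul_conjTranspose_same G).isHermitian
  have hM : Mmat A B C D d * Ku * (Mmat A B C D d)ᴴ = E * (G * Ku * Gᴴ) * Eᴴ := by
    simp only [Mmat_eq_blockRow_mul_Gammabar, conjTranspose_mul, Matrix.mul_assoc, E, G]
  rw [hM]
  exact hS.posSemidef_sub_lamMin_smul_one.mul_sub_smul_one_mul_conjTranspose hE

/-- `M K_u Mᵀ ⪰ λ_min(Γ̄ K_u Γ̄ᵀ) I_p`. -/
theorem stmt_10 {n m p : ℕ} (hn : 0 < n) (hm : 0 < m) (hp : 0 < p)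
    (A : Matrix (Fin n) (Fin n) ℝ) (B : Matrix (Fin n) (Fin m) ℝ)
    (C : Matrix (Fin p) (Fin n) ℝ) (D : Matrix (Fin p) (Fin m) ℝ)
    (d : ℕ → ℝ) (hd0 : d 0 ≠ 0)
    (hdnorm : ∑ j ∈ Finset.range (n + 1), d j ^ 2 = 1)
    (Ku : Matrix (Fin (n + 1) × Fin m) (Fin (n + 1) × Fin m) ℝ) (hKu : Ku.PosDef) :
    (Mmat A B C D d * Ku * (Mmat A B C D d)ᴴ -
        lamMin (Gammabar A B C D * Ku * (Gammabar A B C D)ᴴ) •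
          (1 : Matrix (Fin p) (Fin p) ℝ)).PosSemidef :=
  stmt_10_general A B C D d hdnorm Ku hKu
end

section
/- Let 1 ≤ L and N ≥ L + n. If the input sequence {u_k}_{k=0}^{N−1} is persistently exciting of order L + n, then for every system (A,B,C,D) with (A,B) controllable and every initial state x_0 ∈ ℝ^n, the column image of the stacked matrix [H_L(u); H_L(y)] equals the set 𝒯_L of all length-L input-output trajectories of the system, where {y_k}_{k=0}^{N−1} is the output generated from x_0 under u (Willems' Fundamental Lemma). -/
open Matrix Finset

/-- The set `𝒯_L` of length-`L` input-output trajectories of the system: stacked vectors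
`(ū; ȳ)` such that `ȳ` is generated by the system from some initial state under input `ū`. -/
def TrajSet {n m p : ℕ} (A : Matrix (Fin n) (Fin n) ℝ) (B : Matrix (Fin n) (Fin m) ℝ)
    (C : Matrix (Fin p) (Fin n) ℝ) (D : Matrix (Fin p) (Fin m) ℝ) (L : ℕ) :
    Set ((Fin L × Fin m) ⊕ (Fin L × Fin p) → ℝ) :=
  {w | ∃ (xb : Fin n → ℝ) (ub : ℕ → Fin m → ℝ),
      (∀ (i : Fin L) (l : Fin m), w (Sum.inl (i, l)) = ub (i : ℕ) l) ∧
      (∀ (i : Fin L) (j : Fin p), w (Sum.inr (i, j)) = outputSeq A B C D xb ub (i : ℕ) j)}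

/-!
The windows `(ū; ȳ)` of the system depend linearly on `(ū, x̄₀)`, and the `k`-th column of
`[H_L(u); H_L(y)]` is the window generated by the `k`-th column of `[H_L(u); X]`, where
`X = [x_0 ⋯ x_{N-L}]` collects the data states. So it suffices that `[H_L(u); X]` has full row
rank. If `(ξ, η)` annihilates it, combining the relations at times `k, …, k + n` with the
coefficients of the characteristic polynomial of `A` eliminates the state (Cayley–Hamilton) and
leaves a row vector annihilating `H_{L+n}(u)`, which vanishes by persistency of excitation. As the
characteristic polynomial is monic, this triangular system forces `ξ = 0` and `η A^q B = 0` for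
`q < n`, and controllability gives `η = 0`.
-/

section RankLemmas

variable {K ι κ : Type*} [Field K] [Fintype ι] [Fintype κ]

theorem Matrix.vecMul_injective_iff_rank_eq (M : Matrix ι κ K) :
    Function.Injective M.vecMul ↔ M.rank = Fintype.card ι := by
  rw [vecMul_injective_iff, linearIndependent_iff_card_eq_finrank_span, rank_eq_finrank_span_row,
    Set.finrank, eq_comm]

theorem Matrix.mulVec_surjective_of_rank_eq (M : Matrix ι κ K) (h : M.rank = Fintype.card ι) :
    Function.Surjective M.mulVec := by
  have : LinearMap.range M.mulVecLin = ⊤ :=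
    Submodule.eq_top_of_finrank_eq (by rw [← rank, h, Module.finrank_fintype_fun_eq_card])
  exact LinearMap.range_eq_top.mp this

end RankLemmas

def hankel {R ι : Type*} (w : ℕ → ι → R) (L K : ℕ) : Matrix (Fin L × ι) (Fin K) R :=
  of fun il k => w (k + il.1) il.2

section Hankel

variable {R ι : Type*} [CommSemiring R] (w : ℕ → ι → R) {L K : ℕ}

theorem hankel_mulVec (c : Fin K → R) :
    hankel w L K *ᵥ c = fun il => (∑ k, c k • fun t => w (k + t)) il.1 il.2 := by
  ext il
  simp [hankel, mulVec, dotProduct, Finset.sum_apply, mul_comm]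

theorem vecMul_hankel_apply [Fintype ι] (ζ : ℕ → ι → R) (k : Fin K) :
    ((fun il : Fin L × ι => ζ il.1 il.2) ᵥ* hankel w L K) k
      = ∑ s ∈ range L, ζ s ⬝ᵥ w (k + s) := by
  simp only [vecMul, dotProduct, hankel, of_apply, Fintype.sum_prod_type]
  exact Fin.sum_univ_eq_sum_range (fun s => ∑ l, ζ s l * w (k + s) l) L

end Hankel

def controllabilityMatrix {K : Type*} [Semiring K] {n m : ℕ} (A : Matrix (Fin n) (Fin n) K)
    (B : Matrix (Fin n) (Fin m) K) : Matrix (Fin n) (Fin n × Fin m) K :=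
  of fun i jl => (A ^ (jl.1 : ℕ) * B) i jl.2

theorem eq_zero_of_vecMul_pow_mul_eq_zero {K : Type*} [Field K] {n m : ℕ}
    {A : Matrix (Fin n) (Fin n) K} {B : Matrix (Fin n) (Fin m) K}
    (hctrb : (controllabilityMatrix A B).rank = n) {η : Fin n → K}
    (hη : ∀ q < n, η ᵥ* (A ^ q * B) = 0) : η = 0 := by
  have hinj := (controllabilityMatrix A B).vecMul_injective_iff_rank_eq.2 (by simpa using hctrb)
  apply hinj
  ext ⟨q, l⟩
  simpa [controllabilityMatrix, vecMul, dotProduct] using congrFun (hη q q.isLt) l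

theorem eq_zero_of_sum_smul_eq_zero {R V : Type*} [Semiring R] [AddCommMonoid V] [Module R V]
    {n M : ℕ} {d : ℕ → R} (hd : d n = 1) {ω : ℕ → V} (hω : ∀ s, M ≤ s → ω s = 0)
    (h : ∀ s < M, ∑ j ∈ range (n + 1), d j • ω (s + n - j) = 0) (s : ℕ) : ω s = 0 := by
  induction hr : M - s using Nat.strong_induction_on generalizing s with
  | _ r ih =>
    rcases le_or_gt M s with hs | hs
    · exact hω s hs
    have hlower : ∑ j ∈ range n, d j • ω (s + n - j) = 0 :=
      sum_eq_zero fun j hj => by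
        rw [ih (M - (s + n - j)) (by simp at hj; omega) _ rfl, smul_zero]
    simpa [sum_range_succ, hlower, hd] using h s hs

section System

variable {n m p : ℕ} (A : Matrix (Fin n) (Fin n) ℝ) (B : Matrix (Fin n) (Fin m) ℝ)
  (C : Matrix (Fin p) (Fin n) ℝ) (D : Matrix (Fin p) (Fin m) ℝ)

theorem stateSeq_add_s14 (x0 : Fin n → ℝ) (u : ℕ → Fin m → ℝ) (k j : ℕ) :
    stateSeq A B x0 u (k + j) = stateSeq A B (stateSeq A B x0 u k) (fun t => u (k + t)) j := by
  induction j with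
  | zero => rfl
  | succ j ih => rw [← add_assoc, stateSeq, ih, stateSeq]

theorem stateSeq_congr_input (x0 : Fin n → ℝ) {u u' : ℕ → Fin m → ℝ} {k : ℕ}
    (h : ∀ t < k, u t = u' t) : stateSeq A B x0 u k = stateSeq A B x0 u' k := by
  induction k with
  | zero => rfl
  | succ k ih =>
    rw [stateSeq, stateSeq, ih fun t ht => h t (by omega), h k k.lt_succ_self]

theorem stateSeq_sum {ι : Type*} (s : Finset ι) (c : ι → ℝ) (x : ι → Fin n → ℝ)
    (u : ι → ℕ → Fin m → ℝ) (j : ℕ) :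
    stateSeq A B (∑ i ∈ s, c i • x i) (∑ i ∈ s, c i • u i) j
      = ∑ i ∈ s, c i • stateSeq A B (x i) (u i) j := by
  induction j with
  | zero => rfl
  | succ j ih =>
    simp only [stateSeq, ih, Finset.sum_apply, Pi.smul_apply, mulVec_sum, mulVec_smul, smul_add,
      sum_add_distrib]

theorem stateSeq_eq (x0 : Fin n → ℝ) (u : ℕ → Fin m → ℝ) (k : ℕ) :
    stateSeq A B x0 u k = A ^ k *ᵥ x0 + ∑ t ∈ range k, (A ^ (k - 1 - t) * B) *ᵥ u t := by
  induction k with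
  | zero => simp [stateSeq]
  | succ k ih =>
    have hpow : ∀ t ∈ range k, A *ᵥ ((A ^ (k - 1 - t) * B) *ᵥ u t)
        = (A ^ (k + 1 - 1 - t) * B) *ᵥ u t := fun t ht => by
      rw [mulVec_mulVec, ← Matrix.mul_assoc, ← pow_succ', show k - 1 - t + 1 = k + 1 - 1 - t by
        simp at ht; omega]
    rw [stateSeq, ih, mulVec_add, mulVec_sum, sum_congr rfl hpow, mulVec_mulVec, ← pow_succ',
      sum_range_succ]
    simp [add_assoc]

theorem dotProduct_stateSeq_add (η : Fin n → ℝ) (x0 : Fin n → ℝ) (u : ℕ → Fin m → ℝ)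
    (k j : ℕ) :
    η ⬝ᵥ stateSeq A B x0 u (k + j) = (η ᵥ* A ^ j) ⬝ᵥ stateSeq A B x0 u k
      + ∑ t ∈ range j, (η ᵥ* (A ^ (j - 1 - t) * B)) ⬝ᵥ u (k + t) := by
  rw [stateSeq_add_s14, stateSeq_eq, dotProduct_add, dotProduct_sum]
  simp only [dotProduct_mulVec]

theorem outputSeq_add_s14 (x0 : Fin n → ℝ) (u : ℕ → Fin m → ℝ) (k i : ℕ) :
    outputSeq A B C D x0 u (k + i)
      = outputSeq A B C D (stateSeq A B x0 u k) (fun t => u (k + t)) i := by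
  rw [outputSeq, outputSeq, stateSeq_add_s14]

theorem outputSeq_congr_input (x0 : Fin n → ℝ) {u u' : ℕ → Fin m → ℝ} {i : ℕ}
    (h : ∀ t ≤ i, u t = u' t) : outputSeq A B C D x0 u i = outputSeq A B C D x0 u' i := by
  rw [outputSeq, outputSeq, stateSeq_congr_input A B x0 fun t ht => h t ht.le, h i le_rfl]

theorem outputSeq_sum {ι : Type*} (s : Finset ι) (c : ι → ℝ) (x : ι → Fin n → ℝ)
    (u : ι → ℕ → Fin m → ℝ) (i : ℕ) :
    outputSeq A B C D (∑ k ∈ s, c k • x k) (∑ k ∈ s, c k • u k) i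
      = ∑ k ∈ s, c k • outputSeq A B C D (x k) (u k) i := by
  simp only [outputSeq, stateSeq_sum, Finset.sum_apply, Pi.smul_apply, mulVec_sum, mulVec_smul,
    smul_add, sum_add_distrib]

end System

section Trajectories

variable {n m p : ℕ} (A : Matrix (Fin n) (Fin n) ℝ) (B : Matrix (Fin n) (Fin m) ℝ)
  (C : Matrix (Fin p) (Fin n) ℝ) (D : Matrix (Fin p) (Fin m) ℝ) (L : ℕ)

noncomputable def ioTrajectory (x0 : Fin n → ℝ) (u : ℕ → Fin m → ℝ) :
    (Fin L × Fin m) ⊕ (Fin L × Fin p) → ℝ :=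
  Sum.elim (fun il => u il.1 il.2) (fun ij => outputSeq A B C D x0 u ij.1 ij.2)

theorem mem_TrajSet_iff {v : (Fin L × Fin m) ⊕ (Fin L × Fin p) → ℝ} :
    v ∈ TrajSet A B C D L ↔ ∃ x0 u, ioTrajectory A B C D L x0 u = v := by
  refine exists₂_congr fun x0 u => ⟨fun ⟨hu, hy⟩ => ?_, ?_⟩
  · ext (⟨i, l⟩ | ⟨i, j⟩)
    exacts [(hu i l).symm, (hy i j).symm]
  · rintro rfl
    exact ⟨fun _ _ => rfl, fun _ _ => rfl⟩

theorem ioTrajectory_congr_input (x0 : Fin n → ℝ) {u u' : ℕ → Fin m → ℝ}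
    (h : ∀ t < L, u t = u' t) : ioTrajectory A B C D L x0 u = ioTrajectory A B C D L x0 u' := by
  ext (⟨i, l⟩ | ⟨i, j⟩)
  · simp [ioTrajectory, h i i.isLt]
  · simp only [ioTrajectory, Sum.elim_inr]
    rw [outputSeq_congr_input A B C D x0 fun t ht => h t (by omega)]

theorem ioHankel_mulVec (x0 : Fin n → ℝ) (u : ℕ → Fin m → ℝ) {K : ℕ} (c : Fin K → ℝ) :
    (of fun (i : (Fin L × Fin m) ⊕ (Fin L × Fin p)) (k : Fin K) =>
        Sum.elim (fun il : Fin L × Fin m => u (k + il.1) il.2)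
          (fun ij : Fin L × Fin p => outputSeq A B C D x0 u (k + ij.1) ij.2) i) *ᵥ c
      = ioTrajectory A B C D L (∑ k, c k • stateSeq A B x0 u k)
          (∑ k, c k • fun t => u (k + t)) := by
  ext (⟨i, l⟩ | ⟨i, j⟩)
  · simp [ioTrajectory, mulVec, dotProduct, Finset.sum_apply, mul_comm]
  · simp [ioTrajectory, outputSeq_sum, mulVec, dotProduct, outputSeq_add_s14, Finset.sum_apply,
      mul_comm]

end Trajectories

section DataMatrix

variable {n m : ℕ} (A : Matrix (Fin n) (Fin n) ℝ) (B : Matrix (Fin n) (Fin m) ℝ)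

noncomputable def stateMatrix (x0 : Fin n → ℝ) (u : ℕ → Fin m → ℝ) (K : ℕ) :
    Matrix (Fin n) (Fin K) ℝ :=
  of fun j k => stateSeq A B x0 u k j

/-- Input weights of the relation `(ξ, η)` moved `n` steps back: when `ξ` vanishes from `L` on,
`∑ᵢ ξᵢ ⬝ u_{k+n+i} + η ⬝ x_{k+n} = (η Aⁿ) ⬝ x_k + ∑_{s < L+n} ω_s ⬝ u_{k+s}`. -/
def shiftedWeights (ξ : ℕ → Fin m → ℝ) (η : Fin n → ℝ) (s : ℕ) : Fin m → ℝ :=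
  if s < n then η ᵥ* (A ^ (n - 1 - s) * B) else ξ (s - n)

variable {A B} {L : ℕ} {ξ : ℕ → Fin m → ℝ}

theorem relation_add_eq_shiftedWeights (hξ : ∀ i, L ≤ i → ξ i = 0) (η x0 : Fin n → ℝ)
    (u : ℕ → Fin m → ℝ) (k : ℕ) {j : ℕ} (hj : j ≤ n) :
    ∑ i ∈ range L, ξ i ⬝ᵥ u (k + j + i) + η ⬝ᵥ stateSeq A B x0 u (k + j)
      = (η ᵥ* A ^ j) ⬝ᵥ stateSeq A B x0 u k
        + ∑ s ∈ range (L + n), shiftedWeights A B ξ η (s + n - j) ⬝ᵥ u (k + s) := by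
  have hstate : ∑ t ∈ range j, shiftedWeights A B ξ η (t + n - j) ⬝ᵥ u (k + t)
      = ∑ t ∈ range j, (η ᵥ* (A ^ (j - 1 - t) * B)) ⬝ᵥ u (k + t) :=
    sum_congr rfl fun t ht => by
      simp only [mem_range] at ht
      rw [shiftedWeights, if_pos (by omega), show n - 1 - (t + n - j) = j - 1 - t by omega]
  have hinput : ∑ i ∈ range (L + n - j), shiftedWeights A B ξ η (j + i + n - j) ⬝ᵥ u (k + (j + i))
      = ∑ i ∈ range L, ξ i ⬝ᵥ u (k + j + i) := by
    have hpad : ∑ i ∈ range L, ξ i ⬝ᵥ u (k + j + i)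
        = ∑ i ∈ range (L + n - j), ξ i ⬝ᵥ u (k + j + i) :=
      sum_subset (range_subset_range.2 (by omega)) fun i _ hi => by
        rw [hξ i (by simpa using hi), zero_dotProduct]
    rw [hpad]
    refine sum_congr rfl fun i _ => ?_
    rw [shiftedWeights, if_neg (by omega), show j + i + n - j - n = i by omega, add_assoc]
  rw [show L + n = j + (L + n - j) by omega, sum_range_add, hstate, hinput,
    dotProduct_stateSeq_add]
  ring

theorem sum_charpoly_coeff_mul_relation (hξ : ∀ i, L ≤ i → ξ i = 0) (η x0 : Fin n → ℝ)
    (u : ℕ → Fin m → ℝ) (k : ℕ) :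
    ∑ j ∈ range (n + 1), A.charpoly.coeff j *
        (∑ i ∈ range L, ξ i ⬝ᵥ u (k + j + i) + η ⬝ᵥ stateSeq A B x0 u (k + j))
      = ∑ s ∈ range (L + n),
          (∑ j ∈ range (n + 1), A.charpoly.coeff j • shiftedWeights A B ξ η (s + n - j))
            ⬝ᵥ u (k + s) := by
  have hCH : ∑ j ∈ range (n + 1), A.charpoly.coeff j • A ^ j = 0 := by
    have h := aeval_self_charpoly A
    rwa [Polynomial.aeval_eq_sum_range, charpoly_natDegree_eq_dim, Fintype.card_fin] at h
  have hstate : ∑ j ∈ range (n + 1),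
      A.charpoly.coeff j * ((η ᵥ* A ^ j) ⬝ᵥ stateSeq A B x0 u k) = 0 := by
    simp_rw [← smul_eq_mul, ← smul_dotProduct, ← vecMul_smul, ← sum_dotProduct, ← vecMul_sum,
      hCH, vecMul_zero, zero_dotProduct]
  rw [sum_congr rfl fun j hj => by
    rw [relation_add_eq_shiftedWeights hξ η x0 u k (by simpa [Nat.lt_succ_iff] using hj)]]
  simp_rw [mul_add, sum_add_distrib, hstate, zero_add, mul_sum, ← smul_eq_mul, ← smul_dotProduct,
    sum_dotProduct]
  exact sum_comm

variable (A B)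

theorem eq_zero_of_vecMul_fromRows_hankel_stateMatrix {N : ℕ} (hN : L + n ≤ N)
    {u : ℕ → Fin m → ℝ} (hPE : (hankel u (L + n) (N - (L + n) + 1)).rank = m * (L + n))
    (hctrb : (controllabilityMatrix A B).rank = n) (x0 : Fin n → ℝ)
    {w : (Fin L × Fin m) ⊕ Fin n → ℝ}
    (hw : w ᵥ* fromRows (hankel u L (N - L + 1)) (stateMatrix A B x0 u (N - L + 1)) = 0) :
    w = 0 := by
  set ξ : ℕ → Fin m → ℝ := fun i => if h : i < L then fun l => w (.inl (⟨i, h⟩, l)) else 0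
  set η : Fin n → ℝ := w ∘ Sum.inr
  set ω := shiftedWeights A B ξ η
  have hξ : ∀ i, L ≤ i → ξ i = 0 := fun i hi => dif_neg (by omega)
  have hrel : ∀ k ≤ N - L, ∑ i ∈ range L, ξ i ⬝ᵥ u (k + i) + η ⬝ᵥ stateSeq A B x0 u k = 0 := by
    intro k hk
    have hwξ : w ∘ Sum.inl = fun il => ξ il.1 il.2 := by ext ⟨i, l⟩; simp [ξ]
    have h := congrFun hw ⟨k, by omega⟩
    rw [vecMul_fromRows, Pi.add_apply, hwξ, vecMul_hankel_apply] at h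
    exact h
  set ζ : ℕ → Fin m → ℝ := fun s => ∑ j ∈ range (n + 1), A.charpoly.coeff j • ω (s + n - j)
  have hζ : ∀ s < L + n, ζ s = 0 := by
    have hinj := (hankel u (L + n) (N - (L + n) + 1)).vecMul_injective_iff_rank_eq.2
      (by simpa [mul_comm] using hPE)
    have hker : (fun sl : Fin (L + n) × Fin m => ζ sl.1 sl.2) ᵥ* hankel u (L + n) (N - (L + n) + 1)
        = 0 ᵥ* hankel u (L + n) (N - (L + n) + 1) := by
      ext k
      rw [vecMul_hankel_apply, ← sum_charpoly_coeff_mul_relation hξ η x0, zero_vecMul]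
      exact sum_eq_zero fun j hj => by
        rw [hrel _ (by simp at hj; omega), mul_zero]
    exact fun s hs => funext fun l => congrFun (hinj hker) (⟨s, hs⟩, l)
  have hω : ∀ s, ω s = 0 := eq_zero_of_sum_smul_eq_zero
    (by simpa using A.charpoly_monic.coeff_natDegree)
    (fun s hs => by simp [ω, shiftedWeights, hξ (s - n) (by omega), show ¬ s < n by omega]) hζ
  have hη : η = 0 := eq_zero_of_vecMul_pow_mul_eq_zero hctrb fun q hq => by
    simpa [ω, shiftedWeights, show n - 1 - q < n by omega, show n - 1 - (n - 1 - q) = q by omega]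
      using hω (n - 1 - q)
  ext (⟨i, l⟩ | j)
  · simpa [ω, shiftedWeights, ξ] using congrFun (hω (n + i)) l
  · exact congrFun hη j

end DataMatrix

theorem exists_sum_smul_stateSeq_eq {n m L N : ℕ} (A : Matrix (Fin n) (Fin n) ℝ)
    (B : Matrix (Fin n) (Fin m) ℝ) (hN : L + n ≤ N) {u : ℕ → Fin m → ℝ}
    (hPE : (hankel u (L + n) (N - (L + n) + 1)).rank = m * (L + n))
    (hctrb : (controllabilityMatrix A B).rank = n) (x0 xb : Fin n → ℝ) (ub : ℕ → Fin m → ℝ) :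
    ∃ c : Fin (N - L + 1) → ℝ, ∑ k, c k • stateSeq A B x0 u k = xb ∧
      ∀ t < L, (∑ k, c k • fun t => u (k + t)) t = ub t := by
  set G := fromRows (hankel u L (N - L + 1)) (stateMatrix A B x0 u (N - L + 1))
  have hinj : Function.Injective G.vecMul := (injective_iff_map_eq_zero G.vecMulLinear).2
    fun _ hw => eq_zero_of_vecMul_fromRows_hankel_stateMatrix A B hN hPE hctrb x0 hw
  obtain ⟨c, hc⟩ := G.mulVec_surjective_of_rank_eq (G.vecMul_injective_iff_rank_eq.1 hinj)
    (Sum.elim (fun il => ub il.1 il.2) xb)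
  refine ⟨c, ?_, fun t ht => ?_⟩
  · ext j
    simpa [G, stateMatrix, mulVec, dotProduct, Finset.sum_apply, mul_comm] using
      congrFun hc (.inr j)
  · ext l
    simpa [G, hankel_mulVec] using congrFun hc (.inl (⟨t, ht⟩, l))

theorem stmt_14_general {n m p : ℕ}
    (L N : ℕ) (hN : L + n ≤ N)
    (u : ℕ → Fin m → ℝ)
    (hPE : (Matrix.of fun (il : Fin (L + n) × Fin m) (k : Fin (N - (L + n) + 1)) =>
        u ((k : ℕ) + (il.1 : ℕ)) il.2).rank = m * (L + n)) :
    ∀ (A : Matrix (Fin n) (Fin n) ℝ) (B : Matrix (Fin n) (Fin m) ℝ)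
      (C : Matrix (Fin p) (Fin n) ℝ) (D : Matrix (Fin p) (Fin m) ℝ),
      (Matrix.of fun (i : Fin n) (jl : Fin n × Fin m) =>
          (A ^ (jl.1 : ℕ) * B) i jl.2).rank = n →
      ∀ x0 : Fin n → ℝ,
        {v : (Fin L × Fin m) ⊕ (Fin L × Fin p) → ℝ |
            ∃ c : Fin (N - L + 1) → ℝ,
              (Matrix.of fun (i : (Fin L × Fin m) ⊕ (Fin L × Fin p)) (k : Fin (N - L + 1)) =>
                Sum.elim (fun il : Fin L × Fin m => u ((k : ℕ) + (il.1 : ℕ)) il.2)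
                  (fun ij : Fin L × Fin p =>
                    outputSeq A B C D x0 u ((k : ℕ) + (ij.1 : ℕ)) ij.2) i).mulVec c = v} =
          TrajSet A B C D L := by
  intro A B C D hctrb x0
  ext v
  rw [mem_TrajSet_iff]
  constructor
  · rintro ⟨c, rfl⟩
    exact ⟨_, _, (ioHankel_mulVec A B C D L x0 u c).symm⟩
  · rintro ⟨xb, ub, rfl⟩
    obtain ⟨c, hx, hu⟩ := exists_sum_smul_stateSeq_eq A B hN hPE hctrb x0 xb ub
    exact ⟨c, by rw [ioHankel_mulVec, hx, ioTrajectory_congr_input A B C D L xb hu]⟩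

/-- Willems' Fundamental Lemma: if `u` is PE of order `L + n`, then for every
controllable system and every initial state, the column image of `[H_L(u); H_L(y)]` equals the
set `𝒯_L` of all length-`L` input-output trajectories. -/
theorem stmt_14 {n m p : ℕ} (hn : 0 < n) (hm : 0 < m) (hp : 0 < p)
    (L N : ℕ) (hL : 1 ≤ L) (hN : L + n ≤ N)
    (u : ℕ → Fin m → ℝ)
    (hPE : (Matrix.of fun (il : Fin (L + n) × Fin m) (k : Fin (N - (L + n) + 1)) =>
        u ((k : ℕ) + (il.1 : ℕ)) il.2).rank = m * (L + n)) :
    ∀ (A : Matrix (Fin n) (Fin n) ℝ) (B : Matrix (Fin n) (Fin m) ℝ)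
      (C : Matrix (Fin p) (Fin n) ℝ) (D : Matrix (Fin p) (Fin m) ℝ),
      (Matrix.of fun (i : Fin n) (jl : Fin n × Fin m) =>
          (A ^ (jl.1 : ℕ) * B) i jl.2).rank = n →
      ∀ x0 : Fin n → ℝ,
        {v : (Fin L × Fin m) ⊕ (Fin L × Fin p) → ℝ |
            ∃ c : Fin (N - L + 1) → ℝ,
              (Matrix.of fun (i : (Fin L × Fin m) ⊕ (Fin L × Fin p)) (k : Fin (N - L + 1)) =>
                Sum.elim (fun il : Fin L × Fin m => u ((k : ℕ) + (il.1 : ℕ)) il.2)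
                  (fun ij : Fin L × Fin p =>
                    outputSeq A B C D x0 u ((k : ℕ) + (ij.1 : ℕ)) ij.2) i).mulVec c = v} =
          TrajSet A B C D L :=
  stmt_14_general L N hN u hPE
end
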